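/- arXiv:1803.03761 — 5 statements merged into one kernel-verified Lean document; each statement's English description precedes it below -/
import Mathlib

section
/- Let T ≥ 0 and let X, Z be finite nonempty types and Y a finite additive abelian group. Fix a quantum query algorithm with T queries: a unit vector ψ₀ in H = EuclideanSpace ℂ (X × Y × Z) and unitaries C₀, …, C_T on H; for a function Q : X → Y the final state is ψ^Q := C_T · O_Q · C_{T−1} · ⋯ · O_Q · C₀ · ψ₀, where O_Q is the oracle unitary. Let ε ∈ [0,1], let B ⊆ X be an ε-random subset, and for each subset B let P_B : X → Y be any function with P_B x = 0 for all x ∉ B. Then the expectation over B of the trace distance between the pure states ψ^F and ψ^{F + P_B}, namely E_B [ √(1 − |⟨ψ^F, ψ^{F + P_B}⟩|²) ], is at most 2·T·√ε, for every fixed F : X → Y. -/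
open scoped InnerProductSpace

noncomputable section

/-- The oracle unitary for a function `Q : X → Y`: the permutation unitary induced on
standard basis vectors by `(x, y, z) ↦ (x, y + Q x, z)`. -/
def oracleOp {X Y Z : Type*} [Fintype X] [Fintype Y] [Fintype Z] [AddCommGroup Y]
    (Q : X → Y) :
    EuclideanSpace ℂ (X × Y × Z) →L[ℂ] EuclideanSpace ℂ (X × Y × Z) :=
  LinearMap.toContinuousLinearMap
    { toFun := fun ψ => (WithLp.toLp 2 (fun p : X × Y × Z => ψ (p.1, p.2.1 - Q p.1, p.2.2)) : EuclideanSpace ℂ (X × Y × Z))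
      map_add' := fun _ _ => rfl
      map_smul' := fun _ _ => rfl }

/-- `runQ T C O ψ₀ = C T • O • C (T-1) • ⋯ • O • C 0 • ψ₀`: the final state of a quantum
query algorithm with `T` queries, computation unitaries `C 0, …, C T` and oracle unitary `O`. -/
def runQ {H : Type*} [NormedAddCommGroup H] [NormedSpace ℂ H] :
    (T : ℕ) → (Fin (T + 1) → (H →L[ℂ] H)) → (H →L[ℂ] H) → H → H
  | 0, C, _, ψ => C 0 ψ
  | T + 1, C, O, ψ => C (Fin.last (T + 1)) (O (runQ T (fun i => C i.castSucc) O ψ))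

/-!
By the hybrid argument, the distance between the final states of the `F`-run and the
`(F + P_B)`-run is at most `∑ₜ ‖O_F ψₜ - O_{F + P_B} ψₜ‖`, where `ψₜ` is the state of the
`F`-run before its `t`-th query; the trace distance of unit vectors is bounded by their distance.
The two oracles agree outside `B`, so the `t`-th term is at most twice the square root of the
weight `ψₜ` puts on queries in `B`. Averaging over `B` and using Jensen's inequality, each query
contributes at most `2 √(ε ‖ψₜ‖²) = 2 √ε`.
-/

lemma sqrt_one_sub_norm_inner_sq_le_norm_sub {E : Type*} [NormedAddCommGroup E]
    [InnerProductSpace ℂ E] {ψ φ : E} (hψ : ‖ψ‖ = 1) (hφ : ‖φ‖ = 1) :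
    √(1 - ‖⟪ψ, φ⟫_ℂ‖ ^ 2) ≤ ‖ψ - φ‖ := by
  have h_inner : ‖⟪ψ, φ⟫_ℂ‖ ≤ 1 := by
    simpa [hψ, hφ] using norm_inner_le_norm (𝕜 := ℂ) ψ φ
  have h_re : RCLike.re ⟪ψ, φ⟫_ℂ ≤ ‖⟪ψ, φ⟫_ℂ‖ := RCLike.re_le_norm _
  have h_sub : ‖ψ - φ‖ ^ 2 = 2 - 2 * RCLike.re ⟪ψ, φ⟫_ℂ := by
    rw [norm_sub_sq (𝕜 := ℂ), hψ, hφ]; ring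
  rw [Real.sqrt_le_left (norm_nonneg _)]
  nlinarith [norm_nonneg ⟪ψ, φ⟫_ℂ]

section runQ

variable {H : Type*} [NormedAddCommGroup H] [NormedSpace ℂ H]

theorem norm_runQ (T : ℕ) (C : Fin (T + 1) → (H →L[ℂ] H)) (O : H →L[ℂ] H) (ψ : H)
    (hC : ∀ i x, ‖C i x‖ = ‖x‖) (hO : ∀ x, ‖O x‖ = ‖x‖) : ‖runQ T C O ψ‖ = ‖ψ‖ := by
  induction T with
  | zero => exact hC 0 ψ
  | succ T ih => rw [runQ, hC, hO, ih _ fun i => hC _]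

/-- The hybrid argument: `runQ t (fun i => C (Fin.castLE _ i)) O ψ` is the state of the `O`-run
just before its `t`-th query. -/
theorem norm_runQ_sub_runQ_le (T : ℕ) (C : Fin (T + 1) → (H →L[ℂ] H)) (O O' : H →L[ℂ] H)
    (ψ : H) (hC : ∀ i x, ‖C i x‖ = ‖x‖) (hO' : ∀ x, ‖O' x‖ = ‖x‖) :
    ‖runQ T C O ψ - runQ T C O' ψ‖ ≤
      ∑ t : Fin T, ‖O (runQ t (fun i => C (Fin.castLE (by omega) i)) O ψ) -
        O' (runQ t (fun i => C (Fin.castLE (by omega) i)) O ψ)‖ := by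
  induction T with
  | zero => simp [runQ]
  | succ T ih =>
    set φ := runQ T (fun i => C i.castSucc) O ψ
    set φ' := runQ T (fun i => C i.castSucc) O' ψ
    have h_split : O φ - O' φ' = (O φ - O' φ) + O' (φ - φ') := by rw [map_sub]; abel
    calc ‖runQ (T + 1) C O ψ - runQ (T + 1) C O' ψ‖
        = ‖O φ - O' φ'‖ := by rw [runQ, runQ, ← map_sub, hC]
      _ ≤ ‖O φ - O' φ‖ + ‖φ - φ'‖ := by rw [h_split, ← hO' (φ - φ')]; exact norm_add_le _ _
      _ ≤ _ := by
          rw [Fin.sum_univ_castSucc, add_comm]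
          exact add_le_add_left (ih _ fun i => hC _) _

end runQ

section oracleOp

variable {X Y Z : Type*} [Fintype Y] [Fintype Z]

/-- The query magnitude of `x` in `ψ`: for a unit vector, the probability that measuring `ψ`
returns the query input `x`. -/
def queryWeight (ψ : EuclideanSpace ℂ (X × Y × Z)) (x : X) : ℝ :=
  ∑ q : Y × Z, ‖ψ (x, q)‖ ^ 2

lemma sum_queryWeight [Fintype X] (ψ : EuclideanSpace ℂ (X × Y × Z)) :
    ∑ x, queryWeight ψ x = ‖ψ‖ ^ 2 := by
  rw [EuclideanSpace.norm_sq_eq, Fintype.sum_prod_type]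
  rfl

lemma queryWeight_eq_sum_shift [AddCommGroup Y] (ψ : EuclideanSpace ℂ (X × Y × Z)) (x : X)
    (c : Y) : queryWeight ψ x = ∑ q : Y × Z, ‖ψ (x, q.1 - c, q.2)‖ ^ 2 :=
  (Equiv.sum_comp (Equiv.prodCongr (Equiv.subRight c) (Equiv.refl Z)) _).symm

variable [Fintype X] [AddCommGroup Y]

lemma oracleOp_apply (Q : X → Y) (ψ : EuclideanSpace ℂ (X × Y × Z)) (p : X × Y × Z) :
    oracleOp Q ψ p = ψ (p.1, p.2.1 - Q p.1, p.2.2) := rfl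

lemma norm_oracleOp_apply (Q : X → Y) (ψ : EuclideanSpace ℂ (X × Y × Z)) :
    ‖oracleOp Q ψ‖ = ‖ψ‖ := by
  rw [EuclideanSpace.norm_eq, EuclideanSpace.norm_eq]
  congr 1
  exact Equiv.sum_comp (Equiv.prodShear (Equiv.refl X)
    fun x => Equiv.prodCongr (Equiv.subRight (Q x)) (Equiv.refl Z)) (fun p => ‖ψ p‖ ^ 2)

theorem norm_oracleOp_sub_oracleOp_apply_sq_le (F G : X → Y) (χ : X → Bool)
    (hFG : ∀ x, χ x = false → G x = F x) (ψ : EuclideanSpace ℂ (X × Y × Z)) :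
    ‖oracleOp F ψ - oracleOp G ψ‖ ^ 2 ≤ 4 * ∑ x, if χ x then queryWeight ψ x else 0 := by
  rw [← sum_queryWeight, Finset.mul_sum]
  refine Finset.sum_le_sum fun x _ => ?_
  simp only [queryWeight, PiLp.sub_apply, oracleOp_apply]
  cases hx : χ x
  · simp [hFG x hx]
  · calc ∑ q : Y × Z, ‖ψ (x, q.1 - F x, q.2) - ψ (x, q.1 - G x, q.2)‖ ^ 2
        ≤ ∑ q : Y × Z, 2 * (‖ψ (x, q.1 - F x, q.2)‖ ^ 2 + ‖ψ (x, q.1 - G x, q.2)‖ ^ 2) := by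
          gcongr with q
          exact (pow_le_pow_left₀ (norm_nonneg _) (norm_sub_le _ _) 2).trans add_sq_le
      _ = 4 * queryWeight ψ x := by
          rw [← Finset.mul_sum, Finset.sum_add_distrib, ← queryWeight_eq_sum_shift,
            ← queryWeight_eq_sum_shift]
          ring

end oracleOp

section bernoulli

variable {X : Type*} [Fintype X]

/-- The probability of the subset `{x | χ x}` under the `ε`-random subset distribution. -/
def bernoulliWeight (ε : ℝ) (χ : X → Bool) : ℝ :=
  ∏ x, if χ x then ε else 1 - ε

lemma bernoulliWeight_nonneg {ε : ℝ} (hε0 : 0 ≤ ε) (hε1 : ε ≤ 1) (χ : X → Bool) :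
    0 ≤ bernoulliWeight ε χ :=
  Finset.prod_nonneg fun x _ => by split <;> linarith

lemma sum_bernoulliWeight [DecidableEq X] (ε : ℝ) : ∑ χ : X → Bool, bernoulliWeight ε χ = 1 := by
  simp only [bernoulliWeight]
  rw [← Fintype.prod_sum fun _ (b : Bool) => if b then ε else 1 - ε]
  simp

lemma sum_bernoulliWeight_mul_ite [DecidableEq X] (ε : ℝ) (x₀ : X) :
    ∑ χ : X → Bool, bernoulliWeight ε χ * (if χ x₀ then 1 else 0) = ε := by
  have h_prod : ∀ χ : X → Bool, bernoulliWeight ε χ * (if χ x₀ then 1 else 0) =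
      ∏ x, (if χ x then ε else 1 - ε) * (if x = x₀ then (if χ x then 1 else 0) else 1) := by
    intro χ
    rw [Finset.prod_mul_distrib, Finset.prod_ite_eq' Finset.univ x₀]
    simp [bernoulliWeight]
  simp_rw [h_prod, ← Fintype.prod_sum (fun x (b : Bool) =>
    (if b then ε else 1 - ε) * (if x = x₀ then (if b then 1 else 0) else 1))]
  rw [Finset.prod_eq_single x₀ (fun x _ hx => by simp [hx]) (by simp)]
  simp

theorem sum_bernoulliWeight_mul_sum_ite [DecidableEq X] (ε : ℝ) (m : X → ℝ) :
    ∑ χ : X → Bool, bernoulliWeight ε χ * (∑ x, if χ x then m x else 0) = ε * ∑ x, m x := by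
  calc ∑ χ : X → Bool, bernoulliWeight ε χ * (∑ x, if χ x then m x else 0)
      = ∑ x, m x * ∑ χ : X → Bool, bernoulliWeight ε χ * (if χ x then 1 else 0) := by
        simp_rw [Finset.mul_sum]
        rw [Finset.sum_comm]
        congr! 2 with x _ χ
        split <;> ring
    _ = ε * ∑ x, m x := by simp_rw [sum_bernoulliWeight_mul_ite, Finset.mul_sum, mul_comm]

lemma sum_bernoulliWeight_mul_le_sqrt [DecidableEq X] {ε : ℝ} (hε0 : 0 ≤ ε) (hε1 : ε ≤ 1)
    (a : (X → Bool) → ℝ) :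
    ∑ χ, bernoulliWeight ε χ * a χ ≤ √(∑ χ, bernoulliWeight ε χ * a χ ^ 2) := by
  refine Real.le_sqrt_of_sq_le ?_
  simpa using (even_two.convexOn_pow (𝕜 := ℝ)).map_sum_le (t := Finset.univ)
    (fun χ _ => bernoulliWeight_nonneg hε0 hε1 χ) (sum_bernoulliWeight ε) (fun _ _ => trivial)

end bernoulli

theorem sum_bernoulliWeight_mul_norm_oracleOp_sub_le {X Y Z : Type*} [Fintype X] [DecidableEq X]
    [Fintype Y] [Fintype Z] [AddCommGroup Y] {ε : ℝ} (hε0 : 0 ≤ ε) (hε1 : ε ≤ 1) (F : X → Y)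
    (G : (X → Bool) → X → Y) (hG : ∀ χ x, χ x = false → G χ x = F x)
    (ψ : EuclideanSpace ℂ (X × Y × Z)) :
    ∑ χ, bernoulliWeight ε χ * ‖oracleOp F ψ - oracleOp (G χ) ψ‖ ≤ 2 * √ε * ‖ψ‖ := by
  calc ∑ χ, bernoulliWeight ε χ * ‖oracleOp F ψ - oracleOp (G χ) ψ‖
      ≤ √(∑ χ, bernoulliWeight ε χ * ‖oracleOp F ψ - oracleOp (G χ) ψ‖ ^ 2) :=
        sum_bernoulliWeight_mul_le_sqrt hε0 hε1 _
    _ ≤ √(∑ χ, bernoulliWeight ε χ * (4 * ∑ x, if χ x then queryWeight ψ x else 0)) := by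
        gcongr with χ
        · exact bernoulliWeight_nonneg hε0 hε1 χ
        · exact norm_oracleOp_sub_oracleOp_apply_sq_le F (G χ) χ (hG χ) ψ
    _ = 2 * √ε * ‖ψ‖ := by
        simp_rw [mul_left_comm _ (4 : ℝ), ← Finset.mul_sum, sum_bernoulliWeight_mul_sum_ite,
          sum_queryWeight]
        rw [show (4 : ℝ) * (ε * ‖ψ‖ ^ 2) = (2 * √ε * ‖ψ‖) ^ 2 by
          rw [mul_pow, mul_pow, Real.sq_sqrt hε0]; ring]
        exact Real.sqrt_sq (by positivity)

theorem blinding_simulation_general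
    {X Y Z : Type*} [Fintype X] [DecidableEq X]
    [Fintype Z] [Fintype Y] [AddCommGroup Y]
    (T : ℕ)
    (ψ₀ : EuclideanSpace ℂ (X × Y × Z)) (hψ₀ : ‖ψ₀‖ = 1)
    (C : Fin (T + 1) →
      (EuclideanSpace ℂ (X × Y × Z) →L[ℂ] EuclideanSpace ℂ (X × Y × Z)))
    (hC : ∀ i, C i ∈
      unitary (EuclideanSpace ℂ (X × Y × Z) →L[ℂ] EuclideanSpace ℂ (X × Y × Z)))
    (ε : ℝ) (hε0 : 0 ≤ ε) (hε1 : ε ≤ 1)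
    (P : (X → Bool) → X → Y)
    (hP : ∀ χ x, χ x = false → P χ x = 0)
    (F : X → Y) :
    ∑ χ : X → Bool,
      (∏ x : X, (if χ x then ε else 1 - ε)) *
        Real.sqrt (1 -
          ‖(⟪runQ T C (oracleOp F) ψ₀, runQ T C (oracleOp (F + P χ)) ψ₀⟫_ℂ)‖ ^ 2)
      ≤ 2 * (T : ℝ) * Real.sqrt ε := by
  have hC_isometry i x : ‖C i x‖ = ‖x‖ := ContinuousLinearMap.norm_map_of_mem_unitary (hC i) x
  have h_unit (Q : X → Y) : ‖runQ T C (oracleOp Q) ψ₀‖ = 1 :=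
    (norm_runQ _ _ _ _ hC_isometry (norm_oracleOp_apply Q)).trans hψ₀
  let ψ (t : Fin T) := runQ t (fun i => C (Fin.castLE (by omega) i)) (oracleOp F) ψ₀
  have h_query_unit (t : Fin T) : ‖ψ t‖ = 1 :=
    (norm_runQ _ _ _ _ (fun _ => hC_isometry _) (norm_oracleOp_apply F)).trans hψ₀
  calc ∑ χ, bernoulliWeight ε χ *
        √(1 - ‖⟪runQ T C (oracleOp F) ψ₀, runQ T C (oracleOp (F + P χ)) ψ₀⟫_ℂ‖ ^ 2)
      ≤ ∑ χ, bernoulliWeight ε χ * ∑ t, ‖oracleOp F (ψ t) - oracleOp (F + P χ) (ψ t)‖ := by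
        refine Finset.sum_le_sum fun χ _ =>
          mul_le_mul_of_nonneg_left ?_ (bernoulliWeight_nonneg hε0 hε1 χ)
        exact (sqrt_one_sub_norm_inner_sq_le_norm_sub (h_unit F) (h_unit (F + P χ))).trans
          (norm_runQ_sub_runQ_le T C _ _ ψ₀ hC_isometry (norm_oracleOp_apply _))
    _ = ∑ t, ∑ χ, bernoulliWeight ε χ * ‖oracleOp F (ψ t) - oracleOp (F + P χ) (ψ t)‖ := by
        simp_rw [Finset.mul_sum]
        exact Finset.sum_comm
    _ ≤ ∑ t, 2 * √ε * ‖ψ t‖ := by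
        gcongr with t
        exact sum_bernoulliWeight_mul_norm_oracleOp_sub_le hε0 hε1 F _
          (fun χ x hx => by simp [hP χ x hx]) (ψ t)
    _ = 2 * T * √ε := by simp [h_query_unit]; ring

theorem blinding_simulation
    {X Y Z : Type*} [Fintype X] [DecidableEq X] [Nonempty X]
    [Fintype Z] [Nonempty Z] [Fintype Y] [AddCommGroup Y]
    (T : ℕ)
    (ψ₀ : EuclideanSpace ℂ (X × Y × Z)) (hψ₀ : ‖ψ₀‖ = 1)
    (C : Fin (T + 1) →
      (EuclideanSpace ℂ (X × Y × Z) →L[ℂ] EuclideanSpace ℂ (X × Y × Z)))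
    (hC : ∀ i, C i ∈
      unitary (EuclideanSpace ℂ (X × Y × Z) →L[ℂ] EuclideanSpace ℂ (X × Y × Z)))
    (ε : ℝ) (hε0 : 0 ≤ ε) (hε1 : ε ≤ 1)
    (P : (X → Bool) → X → Y)
    (hP : ∀ χ x, χ x = false → P χ x = 0)
    (F : X → Y) :
    ∑ χ : X → Bool,
      (∏ x : X, (if χ x then ε else 1 - ε)) *
        Real.sqrt (1 -
          ‖(⟪runQ T C (oracleOp F) ψ₀, runQ T C (oracleOp (F + P χ)) ψ₀⟫_ℂ)‖ ^ 2)
      ≤ 2 * (T : ℝ) * Real.sqrt ε :=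
  blinding_simulation_general T ψ₀ hψ₀ C hC ε hε0 hε1 P hP F

end
end

section
/- Let q ≥ 0, let X, Z be finite nonempty types and Y a finite additive abelian group with |Y| ≥ 2. Fix a quantum query algorithm with q queries: a unit vector ψ₀ in H = EuclideanSpace ℂ (X × Y × Z) and unitaries C₀, …, C_q on H; for f : X → Y the final state is ψ^f := C_q · O_f · C_{q−1} · ⋯ · O_f · C₀ · ψ₀, where O_f is the oracle unitary. Let out : X × Y × Z → (X × Y)^(q+1) be any readout function assigning to each computational-basis label a list of q+1 candidate input–output pairs. Then the probability, with f drawn uniformly at random from all functions X → Y, that a computational-basis measurement of ψ^f yields an outcome w such that the q+1 pairs (xᵢ, yᵢ) = (out w)ᵢ have pairwise distinct inputs xᵢ and satisfy f xᵢ = yᵢ for all i, is at most 2^⌈log₂(q+1)⌉ / |Y|. Formally: E_{f uniform} [ Σ over basis labels w for which out w consists of q+1 distinct-input correct pairs of |⟨e_w, ψ^f⟩|² ] ≤ 2^⌈log₂(q+1)⌉ / |Y|. -/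
/-!
Fix a basis label `w` and view the amplitude `f ↦ ψ^f w` as a vector in `ℓ²(X → Y)`. Each oracle
call multiplies by an indicator `[f x = c]` of one coordinate and the unitaries take linear
combinations, so after `q` queries the amplitude has Efron–Stein degree at most `q`: it is killed
by `R_T = ∏_{t ∈ T} (1 - E_t)` whenever `|T| > q`, where `E_t` averages over the value `f t`.
Both `R_T` and the projection `P` onto `{f | f = b on T}` are orthogonal projections, and
`P R_T P = (1 - 1/|Y|)^|T| P`; hence a vector in the range of `1 - R_T` keeps at most a fraction
`1 - (1 - 1/|Y|)^(q+1) ≤ (q+1)/|Y|` of its squared norm under `P`. Summing over `w` and using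
`∑_w |ψ^f w|² = 1` for every `f` gives the bound, as `q + 1 ≤ 2^⌈log₂(q+1)⌉`.
-/

open scoped InnerProductSpace

noncomputable section

open Finset Function

section ProjectionBound

variable {𝕜 E : Type*} [RCLike 𝕜] [NormedAddCommGroup E] [InnerProductSpace 𝕜 E]

theorem LinearMap.IsSymmetricProjection.norm_apply_sq_le_of_mul_mul_eq
    {P S : E →ₗ[𝕜] E} (hP : P.IsSymmetricProjection) (hS : S.IsSymmetricProjection)
    {c : ℝ} (hc : 0 ≤ c) (hPSP : P * S * P = (c : 𝕜) • P) {v : E} (hv : S v = v) :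
    ‖P v‖ ^ 2 ≤ c * ‖v‖ ^ 2 := by
  have hPP (x : E) : P (P x) = P x := congr($(hP.isIdempotentElem.eq) x)
  have hSS (x : E) : S (S x) = S x := congr($(hS.isIdempotentElem.eq) x)
  have hPv : ⟪P v, P v⟫_𝕜 = ⟪S (P v), v⟫_𝕜 := by
    rw [← hP.isSymmetric, hPP, ← hv, ← hS.isSymmetric, hv]
  have hSPv : ‖S (P v)‖ ^ 2 = c * ‖P v‖ ^ 2 := by
    have : ⟪S (P v), S (P v)⟫_𝕜 = (c : 𝕜) * ⟪P v, P v⟫_𝕜 := by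
      calc ⟪S (P v), S (P v)⟫_𝕜 = ⟪P (S (P v)), P v⟫_𝕜 := by
            rw [← hS.isSymmetric, hSS, ← hPP v, ← hP.isSymmetric, hPP]
        _ = (c : 𝕜) * ⟪P v, P v⟫_𝕜 := by
            rw [← Module.End.mul_apply, ← Module.End.mul_apply, hPSP]
            simp [inner_smul_left]
    rw [inner_self_eq_norm_sq_to_K, inner_self_eq_norm_sq_to_K] at this
    exact_mod_cast this
  have hsq : (‖P v‖ ^ 2) ^ 2 ≤ c * ‖P v‖ ^ 2 * ‖v‖ ^ 2 := by
    calc (‖P v‖ ^ 2) ^ 2 = ‖⟪S (P v), v⟫_𝕜‖ ^ 2 := by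
          rw [← hPv, inner_self_eq_norm_sq_to_K]; norm_cast; simp
      _ ≤ (‖S (P v)‖ * ‖v‖) ^ 2 := by gcongr; exact norm_inner_le_norm _ _
      _ = c * ‖P v‖ ^ 2 * ‖v‖ ^ 2 := by rw [mul_pow, hSPv]
  rcases (sq_nonneg ‖P v‖).eq_or_lt with h0 | hpos
  · rw [← h0]; positivity
  · nlinarith

end ProjectionBound

namespace BonehZhandry

section SupportProj

variable {ι : Type*} (s : Set ι)

def supportProj : EuclideanSpace ℂ ι →ₗ[ℂ] EuclideanSpace ℂ ι where
  toFun v := WithLp.toLp 2 (s.indicator v)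
  map_add' v w := by ext i; simp [Set.indicator_add']
  map_smul' c v := by ext i; exact Set.indicator_const_smul_apply s c v i

@[simp] lemma ofLp_supportProj (v : EuclideanSpace ℂ ι) : (supportProj s v).ofLp = s.indicator v :=
  rfl

lemma supportProj_mul (s' : Set ι) : supportProj s * supportProj s' = supportProj (s ∩ s') := by
  ext v i; simp [Set.indicator_indicator]

lemma isIdempotentElem_supportProj : IsIdempotentElem (supportProj s) := by
  rw [IsIdempotentElem, supportProj_mul, Set.inter_self]

lemma isSymmetricProjection_supportProj [Fintype ι] : (supportProj s).IsSymmetricProjection where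
  isIdempotentElem := isIdempotentElem_supportProj s
  isSymmetric v w := by
    classical
    simp only [PiLp.inner_apply, ofLp_supportProj, Set.indicator_apply]
    refine sum_congr rfl fun i _ => ?_
    split_ifs <;> simp

lemma norm_supportProj_sq [Fintype ι] (v : EuclideanSpace ℂ ι) :
    ‖supportProj s v‖ ^ 2 = ∑ i, s.indicator (fun i => ‖v i‖ ^ 2) i := by
  classical
  simp only [EuclideanSpace.norm_sq_eq, ofLp_supportProj, Set.indicator_apply]
  refine sum_congr rfl fun i _ => ?_
  split_ifs <;> simp

end SupportProj

section Averaging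

variable {X Y : Type*} [DecidableEq X] [Fintype Y]

def averageAt (t : X) : EuclideanSpace ℂ (X → Y) →ₗ[ℂ] EuclideanSpace ℂ (X → Y) where
  toFun G := WithLp.toLp 2 fun f => (Fintype.card Y : ℂ)⁻¹ * ∑ y, G (update f t y)
  map_add' G H := by ext f; simp [sum_add_distrib, mul_add]
  map_smul' c G := by ext f; simp [mul_sum]; ring_nf

@[simp] lemma averageAt_apply (t : X) (G : EuclideanSpace ℂ (X → Y)) (f : X → Y) :
    averageAt t G f = (Fintype.card Y : ℂ)⁻¹ * ∑ y, G (update f t y) :=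
  rfl

lemma commute_averageAt (t s : X) : Commute (averageAt (Y := Y) t) (averageAt s) := by
  obtain rfl | hts := eq_or_ne t s
  · rfl
  ext G f
  simp only [Module.End.mul_apply, averageAt_apply, mul_sum, update_comm hts]
  rw [sum_comm]

lemma commute_averageAt_supportProj {t : X} {s : Set (X → Y)}
    (hs : ∀ f y, update f t y ∈ s ↔ f ∈ s) : Commute (averageAt t) (supportProj s) := by
  ext G f
  by_cases hf : f ∈ s <;> simp [hs, hf]

lemma sum_sum_update_comm [Fintype X] {M : Type*} [AddCommMonoid M] (t : X)
    (F : (X → Y) → (X → Y) → M) :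
    ∑ f, ∑ y, F (update f t y) f = ∑ f, ∑ y, F f (update f t y) := by
  let e : (X → Y) × Y ≃ (X → Y) × Y :=
    { toFun p := (update p.1 t p.2, p.1 t)
      invFun p := (update p.1 t p.2, p.1 t)
      left_inv p := by simp
      right_inv p := by simp }
  simpa only [Fintype.sum_prod_type] using
    Fintype.sum_equiv e (fun p => F (update p.1 t p.2) p.1) (fun p => F p.1 (update p.1 t p.2))
      fun p => by simp [e]

variable [Nonempty Y]

lemma averageAt_eq_self_of_forall {t : X} {G : EuclideanSpace ℂ (X → Y)}
    (hG : ∀ f y, G (update f t y) = G f) : averageAt t G = G := by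
  ext f
  simp [hG, Fintype.card_ne_zero]

lemma isSymmetricProjection_averageAt [Fintype X] (t : X) :
    (averageAt (Y := Y) t).IsSymmetricProjection where
  isIdempotentElem := LinearMap.ext fun G => averageAt_eq_self_of_forall fun f y => by simp
  isSymmetric G H := by
    simp only [PiLp.inner_apply, averageAt_apply, RCLike.inner_apply, map_mul, map_inv₀,
      map_natCast, map_sum, mul_sum, sum_mul]
    refine (sum_sum_update_comm t fun f g => H g * ((Fintype.card Y : ℂ)⁻¹ * (starRingEnd ℂ) (G f))).trans
      (sum_congr rfl fun _ _ => sum_congr rfl fun _ _ => by ring)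

end Averaging

section Agreement

variable {X Y : Type*}

def agreeProj (T : Finset X) (b : X → Y) : EuclideanSpace ℂ (X → Y) →ₗ[ℂ] EuclideanSpace ℂ (X → Y) :=
  supportProj {f | ∀ x ∈ T, f x = b x}

lemma isIdempotentElem_agreeProj (T : Finset X) (b : X → Y) : IsIdempotentElem (agreeProj T b) :=
  isIdempotentElem_supportProj _

lemma commute_agreeProj (T T' : Finset X) (b : X → Y) :
    Commute (agreeProj T b) (agreeProj T' b) := by
  simp only [Commute, SemiconjBy, agreeProj, supportProj_mul, Set.inter_comm]

variable [DecidableEq X]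

lemma agreeProj_insert {t : X} {T : Finset X} (b : X → Y) :
    agreeProj (insert t T) b = agreeProj {t} b * agreeProj T b := by
  simp only [agreeProj, supportProj_mul, forall_mem_insert, forall_eq, mem_singleton]
  rfl

variable [Fintype Y]

lemma commute_averageAt_agreeProj {t : X} {T : Finset X} (ht : t ∉ T) (b : X → Y) :
    Commute (averageAt t) (agreeProj T b) :=
  commute_averageAt_supportProj fun f y => by
    refine forall₂_congr fun x hx => ?_
    rw [update_of_ne (ne_of_mem_of_not_mem hx ht)]

lemma agreeProj_mul_averageAt_mul_agreeProj {t : X} {T : Finset X} (ht : t ∈ T) (b : X → Y) :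
    agreeProj T b * averageAt t * agreeProj T b = (Fintype.card Y : ℂ)⁻¹ • agreeProj T b := by
  classical
  ext G f
  by_cases hf : ∀ x ∈ T, f x = b x
  · have hupd (y : Y) : (∀ x ∈ T, update f t y x = b x) ↔ y = f t := by
      refine ⟨fun h => by simpa [hf t ht] using h t ht, fun h x hx => ?_⟩
      obtain rfl | hxt := eq_or_ne x t
      · simp [h, hf x hx]
      · simp [hxt, hf x hx]
    simp [agreeProj, Set.indicator_apply, hupd]
  · simp [agreeProj, hf]

end Agreement

section JointPart

variable {X Y : Type*} [DecidableEq X] [Fintype Y]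

lemma commute_one_sub_averageAt (t s : X) :
    Commute (1 - averageAt (Y := Y) t) (1 - averageAt s) :=
  (Commute.one_left _).sub_left ((Commute.one_right _).sub_right (commute_averageAt t s))

lemma pairwise_commute_one_sub_averageAt (T : Set X) :
    T.Pairwise (Commute on fun t => 1 - averageAt (Y := Y) t) :=
  fun t _ s _ _ => commute_one_sub_averageAt t s

/-- `jointPart T G` is the sum of the Efron–Stein components of `G` whose index set contains `T`. -/
def jointPart (T : Finset X) : EuclideanSpace ℂ (X → Y) →ₗ[ℂ] EuclideanSpace ℂ (X → Y) :=
  T.noncommProd (fun t => 1 - averageAt t) (pairwise_commute_one_sub_averageAt _)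

lemma jointPart_insert {t : X} {T : Finset X} (ht : t ∉ T) :
    jointPart (Y := Y) (insert t T) = (1 - averageAt t) * jointPart T :=
  noncommProd_insert_of_notMem _ _ _ _ ht

lemma jointPart_eq_mul_erase {t : X} {T : Finset X} (ht : t ∈ T) :
    jointPart (Y := Y) T = (1 - averageAt t) * jointPart (T.erase t) :=
  (mul_noncommProd_erase _ ht _ _).symm

lemma commute_jointPart {A : EuclideanSpace ℂ (X → Y) →ₗ[ℂ] EuclideanSpace ℂ (X → Y)}
    {T : Finset X} (h : ∀ s ∈ T, Commute A (1 - averageAt s)) : Commute A (jointPart T) :=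
  noncommProd_commute _ _ _ _ h

lemma jointPart_apply_eq_zero {t : X} {T : Finset X} (ht : t ∈ T) {G : EuclideanSpace ℂ (X → Y)}
    (hG : averageAt t G = G) : jointPart T G = 0 := by
  have hcomm : Commute (1 - averageAt t) (jointPart (Y := Y) (T.erase t)) :=
    commute_jointPart fun s _ => commute_one_sub_averageAt t s
  rw [jointPart_eq_mul_erase ht, hcomm.eq, Module.End.mul_apply, LinearMap.sub_apply, hG,
    Module.End.one_apply, sub_self, map_zero]

lemma isSymmetricProjection_jointPart [Fintype X] [Nonempty Y] (T : Finset X) :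
    (jointPart (Y := Y) T).IsSymmetricProjection := by
  induction T using Finset.induction_on with
  | empty => exact ⟨IsIdempotentElem.one, LinearMap.IsSymmetric.one⟩
  | insert t T ht ih =>
    have hA := isSymmetricProjection_averageAt (Y := Y) t
    have hcomm : Commute (1 - averageAt t) (jointPart (Y := Y) T) :=
      commute_jointPart fun s _ => commute_one_sub_averageAt t s
    rw [jointPart_insert ht]
    exact ⟨hA.isIdempotentElem.one_sub.mul_of_commute hcomm ih.isIdempotentElem,
      (LinearMap.IsSymmetric.one.sub hA.isSymmetric).mul_of_commute ih.isSymmetric hcomm⟩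

lemma agreeProj_mul_jointPart_mul_agreeProj (T : Finset X) (b : X → Y) :
    agreeProj T b * jointPart T * agreeProj T b
      = (1 - (Fintype.card Y : ℂ)⁻¹) ^ #T • agreeProj T b := by
  induction T using Finset.induction_on with
  | empty => simp [jointPart, (isIdempotentElem_agreeProj ∅ b).eq]
  | insert t T ht ih =>
    set A := agreeProj {t} b
    set B := agreeProj T b
    set E := 1 - averageAt (Y := Y) t
    set R := jointPart (Y := Y) T
    have hAEA : A * E * A = (1 - (Fintype.card Y : ℂ)⁻¹) • A := by
      rw [mul_sub, sub_mul, mul_one, (isIdempotentElem_agreeProj {t} b).eq,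
        agreeProj_mul_averageAt_mul_agreeProj (mem_singleton_self t), sub_smul, one_smul]
    have hBE : Commute B E := (Commute.one_right _).sub_right (commute_averageAt_agreeProj ht b).symm
    have hRA : Commute R A := (commute_jointPart fun s hs => (Commute.one_right _).sub_right
      (commute_averageAt_agreeProj (by simpa using ne_of_mem_of_not_mem hs ht) b).symm).symm
    have hBA : Commute B A := commute_agreeProj _ _ b
    rw [agreeProj_insert, jointPart_insert ht, card_insert_of_notMem ht]
    calc A * B * (E * R) * (A * B) = A * (B * E) * (R * A) * B := by simp only [mul_assoc]
      _ = A * E * (B * A) * R * B := by rw [hBE.eq, hRA.eq]; simp only [mul_assoc]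
      _ = (A * E * A) * (B * R * B) := by rw [hBA.eq]; simp only [mul_assoc]
      _ = _ := by rw [hAEA, ih, smul_mul_smul_comm, ← pow_succ']

end JointPart

section Degree

variable {X Y : Type*} [DecidableEq X] [Fintype Y]

/-- Degree at most `d` in the Efron–Stein sense: no component involves more than `d` coordinates. -/
def degreeLE (d : ℕ) : Submodule ℂ (EuclideanSpace ℂ (X → Y)) :=
  ⨅ (T : Finset X) (_ : d < #T), LinearMap.ker (jointPart T)

lemma mem_degreeLE {d : ℕ} {G : EuclideanSpace ℂ (X → Y)} :
    G ∈ degreeLE d ↔ ∀ T : Finset X, d < #T → jointPart T G = 0 := by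
  simp [degreeLE, Submodule.mem_iInf]

lemma mem_degreeLE_zero_of_forall [Nonempty Y] {G : EuclideanSpace ℂ (X → Y)}
    (hG : ∀ f g, G f = G g) : G ∈ degreeLE 0 := by
  refine mem_degreeLE.2 fun T hT => ?_
  obtain ⟨t, ht⟩ := card_pos.1 hT
  exact jointPart_apply_eq_zero ht (averageAt_eq_self_of_forall fun f y => hG _ _)

lemma supportProj_mem_degreeLE_succ {d : ℕ} {G : EuclideanSpace ℂ (X → Y)} (hG : G ∈ degreeLE d)
    {x : X} {s : Set (X → Y)} (hs : ∀ t ≠ x, ∀ f y, update f t y ∈ s ↔ f ∈ s) :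
    supportProj s G ∈ degreeLE (d + 1) := by
  refine mem_degreeLE.2 fun T hT => ?_
  have hcomm : Commute (jointPart (T.erase x)) (supportProj s) :=
    (commute_jointPart fun t ht => (Commute.one_right _).sub_right
      (commute_averageAt_supportProj (hs t (ne_of_mem_erase ht))).symm).symm
  have hzero : jointPart (T.erase x) G = 0 :=
    mem_degreeLE.1 hG _ (by have := pred_card_le_card_erase (s := T) (a := x); omega)
  have hjoint : jointPart (T.erase x) (supportProj s G) = 0 := by
    rw [← Module.End.mul_apply, hcomm.eq, Module.End.mul_apply, hzero, map_zero]
  by_cases hx : x ∈ T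
  · rw [jointPart_eq_mul_erase hx, Module.End.mul_apply, hjoint, map_zero]
  · rwa [erase_eq_of_notMem hx] at hjoint

theorem norm_agreeProj_sq_le [Fintype X] [Nonempty Y] {d : ℕ} {G : EuclideanSpace ℂ (X → Y)}
    (hG : G ∈ degreeLE d) {T : Finset X} (hT : d < #T) (b : X → Y) :
    ‖agreeProj T b G‖ ^ 2 ≤ (1 - (1 - (Fintype.card Y : ℝ)⁻¹) ^ #T) * ‖G‖ ^ 2 := by
  have hR := isSymmetricProjection_jointPart (Y := Y) T
  have hN : (Fintype.card Y : ℝ)⁻¹ ≤ 1 := inv_le_one_of_one_le₀ (mod_cast Fintype.card_pos)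
  have hN' : 0 ≤ (Fintype.card Y : ℝ)⁻¹ := by positivity
  refine (isSymmetricProjection_supportProj _).norm_apply_sq_le_of_mul_mul_eq
    ⟨hR.isIdempotentElem.one_sub, LinearMap.IsSymmetric.one.sub hR.isSymmetric⟩
    (sub_nonneg.2 (pow_le_one₀ (by linarith) (by linarith))) ?_ ?_
  · rw [mul_sub, sub_mul, mul_one, (isIdempotentElem_agreeProj T b).eq,
      agreeProj_mul_jointPart_mul_agreeProj]
    push_cast
    rw [sub_smul, one_smul]
  · rw [LinearMap.sub_apply, mem_degreeLE.1 hG T hT, sub_zero, Module.End.one_apply]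

theorem sum_norm_sq_correct_pairs_le [Fintype X] [DecidableEq Y] [Nonempty Y] {d n : ℕ} (hdn : d < n)
    {G : EuclideanSpace ℂ (X → Y)} (hG : G ∈ degreeLE d) (pairs : Fin n → X × Y) :
    ∑ f : X → Y, (if Injective (fun i => (pairs i).1) ∧ ∀ i, f (pairs i).1 = (pairs i).2
        then ‖G f‖ ^ 2 else 0)
      ≤ n / Fintype.card Y * ‖G‖ ^ 2 := by
  by_cases hinj : Injective fun i => (pairs i).1
  swap
  · simp only [hinj, false_and, if_false, sum_const_zero]
    positivity
  set T := univ.image fun i => (pairs i).1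
  set b := extend (fun i => (pairs i).1) (fun i => (pairs i).2) fun _ => Classical.arbitrary Y
  have hT : #T = n := by rw [card_image_of_injective _ hinj, card_univ, Fintype.card_fin]
  have hcorrect (f : X → Y) : (∀ i, f (pairs i).1 = (pairs i).2) ↔ ∀ x ∈ T, f x = b x := by
    simp [T, b, hinj.extend_apply]
  have hbernoulli : 1 - n * (Fintype.card Y : ℝ)⁻¹ ≤ (1 - (Fintype.card Y : ℝ)⁻¹) ^ n := by
    have hN : (Fintype.card Y : ℝ)⁻¹ ≤ 1 := inv_le_one_of_one_le₀ (mod_cast Fintype.card_pos)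
    simpa [sub_eq_add_neg] using one_add_mul_le_pow (a := -(Fintype.card Y : ℝ)⁻¹) (by linarith) n
  calc _ = ‖agreeProj T b G‖ ^ 2 := by
        rw [agreeProj, norm_supportProj_sq]
        simp [hinj, hcorrect, Set.indicator_apply]
    _ ≤ (1 - (1 - (Fintype.card Y : ℝ)⁻¹) ^ #T) * ‖G‖ ^ 2 := norm_agreeProj_sq_le hG (hT ▸ hdn) b
    _ ≤ n / Fintype.card Y * ‖G‖ ^ 2 := by
        rw [hT, div_eq_mul_inv]
        gcongr
        linarith

end Degree

section Amplitude

variable {X Y W : Type*}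

def amplitude (Ψ : (X → Y) → EuclideanSpace ℂ W) (w : W) : EuclideanSpace ℂ (X → Y) :=
  WithLp.toLp 2 fun f => Ψ f w

lemma amplitude_map_mem [Fintype W] [DecidableEq W] {D : Submodule ℂ (EuclideanSpace ℂ (X → Y))}
    {Ψ : (X → Y) → EuclideanSpace ℂ W} (hΨ : ∀ w, amplitude Ψ w ∈ D)
    (A : EuclideanSpace ℂ W →L[ℂ] EuclideanSpace ℂ W) (w : W) :
    amplitude (fun f => A (Ψ f)) w ∈ D := by
  have hA : amplitude (fun f => A (Ψ f)) w
      = ∑ w', A (EuclideanSpace.single w' 1) w • amplitude Ψ w' := by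
    ext f
    conv_lhs => rw [amplitude, PiLp.toLp_apply, ← (EuclideanSpace.basisFun _ ℂ).sum_repr (Ψ f)]
    simp [amplitude, mul_comm]
  rw [hA]
  exact D.sum_mem fun w' _ => D.smul_mem _ (hΨ w')

end Amplitude

section Oracle

variable {X Y Z : Type*} [Fintype X] [Fintype Y] [AddCommGroup Y] [Fintype Z]

lemma oracleOp_apply (f : X → Y) (v : EuclideanSpace ℂ (X × Y × Z)) (p : X × Y × Z) :
    oracleOp f v p = v (p.1, p.2.1 - f p.1, p.2.2) :=
  rfl

lemma norm_oracleOp (f : X → Y) (v : EuclideanSpace ℂ (X × Y × Z)) : ‖oracleOp f v‖ = ‖v‖ := by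
  simp only [EuclideanSpace.norm_eq, oracleOp_apply]
  congr 1
  exact Fintype.sum_equiv (Equiv.prodShear (Equiv.refl X) fun x =>
    (Equiv.subRight (f x)).prodCongr (Equiv.refl Z)) _ _ fun p => rfl

variable [DecidableEq X]

lemma amplitude_oracleOp_mem_degreeLE {d : ℕ} {Ψ : (X → Y) → EuclideanSpace ℂ (X × Y × Z)}
    (hΨ : ∀ w, amplitude Ψ w ∈ degreeLE d) (w : X × Y × Z) :
    amplitude (fun f => oracleOp f (Ψ f)) w ∈ degreeLE (d + 1) := by
  classical
  have hO : amplitude (fun f => oracleOp f (Ψ f)) w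
      = ∑ c, supportProj {f | f w.1 = c} (amplitude Ψ (w.1, w.2.1 - c, w.2.2)) := by
    ext f
    simp [amplitude, oracleOp_apply, Set.indicator_apply]
  rw [hO]
  exact (degreeLE _).sum_mem fun c _ =>
    supportProj_mem_degreeLE_succ (x := w.1) (hΨ _) fun t ht f y => by simp [update_of_ne ht.symm]

lemma amplitude_runQ_mem_degreeLE [DecidableEq Y] [DecidableEq Z] (q : ℕ)
    (C : Fin (q + 1) → (EuclideanSpace ℂ (X × Y × Z) →L[ℂ] EuclideanSpace ℂ (X × Y × Z)))
    (ψ : EuclideanSpace ℂ (X × Y × Z)) (w : X × Y × Z) :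
    amplitude (fun f => runQ q C (oracleOp f) ψ) w ∈ degreeLE q := by
  induction q generalizing w with
  | zero => exact mem_degreeLE_zero_of_forall fun _ _ => rfl
  | succ q ih => exact amplitude_map_mem (amplitude_oracleOp_mem_degreeLE (ih _)) _ w

end Oracle

lemma norm_runQ {H : Type*} [NormedAddCommGroup H] [InnerProductSpace ℂ H] [CompleteSpace H]
    (T : ℕ) (C : Fin (T + 1) → (H →L[ℂ] H)) (hC : ∀ i, C i ∈ unitary (H →L[ℂ] H))
    {O : H →L[ℂ] H} (hO : ∀ v, ‖O v‖ = ‖v‖) (ψ : H) : ‖runQ T C O ψ‖ = ‖ψ‖ := by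
  induction T with
  | zero => exact (C 0).norm_map_of_mem_unitary (hC 0) ψ
  | succ T ih =>
    rw [runQ, (C _).norm_map_of_mem_unitary (hC _), hO, ih _ fun i => hC _]

end BonehZhandry

open BonehZhandry in
theorem random_function_BZ_secure_general
    {X Y Z : Type*} [Fintype X] [DecidableEq X]
    [Fintype Z] [DecidableEq Z]
    [Fintype Y] [DecidableEq Y] [AddCommGroup Y]
    (q : ℕ)
    (ψ₀ : EuclideanSpace ℂ (X × Y × Z)) (hψ₀ : ‖ψ₀‖ = 1)
    (C : Fin (q + 1) →
      (EuclideanSpace ℂ (X × Y × Z) →L[ℂ] EuclideanSpace ℂ (X × Y × Z)))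
    (hC : ∀ i, C i ∈
      unitary (EuclideanSpace ℂ (X × Y × Z) →L[ℂ] EuclideanSpace ℂ (X × Y × Z)))
    (out : X × Y × Z → Fin (q + 1) → X × Y) :
    (∑ f : X → Y, ∑ w : X × Y × Z,
        if (Function.Injective fun i => (out w i).1) ∧ (∀ i, f (out w i).1 = (out w i).2)
        then ‖(⟪EuclideanSpace.single w 1, runQ q C (oracleOp f) ψ₀⟫_ℂ)‖ ^ 2
        else 0)
      / (Fintype.card (X → Y) : ℝ)
      ≤ (2 : ℝ) ^ (Nat.clog 2 (q + 1)) / (Fintype.card Y : ℝ) := by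
  have hdeg := amplitude_runQ_mem_degreeLE q C ψ₀
  have hunit (f : X → Y) : ∑ w, ‖runQ q C (oracleOp f) ψ₀ w‖ ^ 2 = 1 := by
    rw [← EuclideanSpace.norm_sq_eq, norm_runQ q C hC (norm_oracleOp f), hψ₀, one_pow]
  calc _ = (∑ w, ∑ f : X → Y,
        if (Function.Injective fun i => (out w i).1) ∧ (∀ i, f (out w i).1 = (out w i).2)
        then ‖amplitude (fun f => runQ q C (oracleOp f) ψ₀) w f‖ ^ 2 else 0)
          / (Fintype.card (X → Y) : ℝ) := by
        rw [sum_comm]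
        simp [EuclideanSpace.inner_single_left, amplitude]
    _ ≤ (∑ w, (q + 1 : ℕ) / Fintype.card Y * ‖amplitude (fun f => runQ q C (oracleOp f) ψ₀) w‖ ^ 2)
          / (Fintype.card (X → Y) : ℝ) := by
        gcongr with w
        exact sum_norm_sq_correct_pairs_le q.lt_succ_self (hdeg w) (out w)
    _ = (q + 1 : ℕ) / Fintype.card Y := by
        simp only [← mul_sum, EuclideanSpace.norm_sq_eq, amplitude]
        rw [sum_comm]
        simp [hunit, Fintype.card_ne_zero]
    _ ≤ (2 : ℝ) ^ (Nat.clog 2 (q + 1)) / (Fintype.card Y : ℝ) := by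
        gcongr
        exact_mod_cast Nat.le_pow_clog one_lt_two _

/-- A `q`-query algorithm produces `q+1` distinct-input correct input–output pairs of a
uniformly random function `f : X → Y` with probability at most `2^⌈log₂(q+1)⌉ / |Y|`
(Boneh–Zhandry security of a random function). -/
theorem random_function_BZ_secure
    {X Y Z : Type*} [Fintype X] [DecidableEq X] [Nonempty X]
    [Fintype Z] [DecidableEq Z] [Nonempty Z]
    [Fintype Y] [DecidableEq Y] [AddCommGroup Y]
    (hY : 2 ≤ Fintype.card Y)
    (q : ℕ)
    (ψ₀ : EuclideanSpace ℂ (X × Y × Z)) (hψ₀ : ‖ψ₀‖ = 1)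
    (C : Fin (q + 1) →
      (EuclideanSpace ℂ (X × Y × Z) →L[ℂ] EuclideanSpace ℂ (X × Y × Z)))
    (hC : ∀ i, C i ∈
      unitary (EuclideanSpace ℂ (X × Y × Z) →L[ℂ] EuclideanSpace ℂ (X × Y × Z)))
    (out : X × Y × Z → Fin (q + 1) → X × Y) :
    (∑ f : X → Y, ∑ w : X × Y × Z,
        if (Function.Injective fun i => (out w i).1) ∧ (∀ i, f (out w i).1 = (out w i).2)
        then ‖(⟪EuclideanSpace.single w 1, runQ q C (oracleOp f) ψ₀⟫_ℂ)‖ ^ 2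
        else 0)
      / (Fintype.card (X → Y) : ℝ)
      ≤ (2 : ℝ) ^ (Nat.clog 2 (q + 1)) / (Fintype.card Y : ℝ) :=
  random_function_BZ_secure_general q ψ₀ hψ₀ C hC out

end
end

section
/- Let k ≥ 1, let ρ be a positive semidefinite d×d complex matrix, and let P₁, …, P_k be orthogonal projection matrices (P_i² = P_i = P_iᴴ) that are pairwise orthogonal (P_i P_j = 0 for i ≠ j) and satisfy Σᵢ Pᵢ = 1. Then k · Σᵢ Pᵢ ρ Pᵢ − ρ is positive semidefinite. Consequently, for every positive semidefinite d×d matrix E, tr(E · Σᵢ Pᵢ ρ Pᵢ) ≥ tr(E ρ)/k. -/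
/-!
Since `∑ i, P i = 1`, expanding gives the identity
`∑ i, ∑ j, (P i - P j) ρ (P i - P j) = 2 (k ∑ i, P i ρ P i - ρ)`, and every summand on the left is
positive semidefinite because the `P i` are self-adjoint. The trace bound then follows from
`0 ≤ tr (E M)` for positive semidefinite `E` and `M`.
-/

open Matrix
open scoped ComplexOrder

theorem Finset.sum_sum_sub_mul_mul_sub_of_sum_eq_one {R ι : Type*} [Ring R] [Fintype ι]
    {P : ι → R} (hP : ∑ i, P i = 1) (a : R) :
    ∑ i, ∑ j, (P i - P j) * a * (P i - P j) = 2 • (Fintype.card ι • ∑ i, P i * a * P i - a) := by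
  have hcross : ∑ i, ∑ j, P i * a * P j = a := by
    simp_rw [← Finset.mul_sum, hP, mul_one, ← Finset.sum_mul, hP, one_mul]
  have hexpand : ∀ i j, (P i - P j) * a * (P i - P j)
      = P i * a * P i + P j * a * P j - P i * a * P j - P j * a * P i := fun i j => by noncomm_ring
  simp_rw [hexpand, Finset.sum_sub_distrib, Finset.sum_add_distrib, hcross,
    Finset.sum_comm (f := fun i j => P j * a * P i), hcross, Finset.sum_const, Finset.card_univ]
  rw [← Finset.smul_sum]
  abel

namespace Matrix

variable {𝕜 n : Type*} [RCLike 𝕜] [Fintype n] [DecidableEq n]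

theorem PosSemidef.card_smul_sum_mul_mul_sub {ι : Type*} [Fintype ι] {ρ : Matrix n n 𝕜}
    (hρ : ρ.PosSemidef) {P : ι → Matrix n n 𝕜} (hP : ∀ i, (P i).IsHermitian)
    (hsum : ∑ i, P i = 1) :
    ((Fintype.card ι : 𝕜) • ∑ i, P i * ρ * P i - ρ).PosSemidef := by
  have hsq : ∀ i j, ((P i - P j) * ρ * (P i - P j)).PosSemidef := fun i j => by
    simpa only [conjTranspose_sub, (hP i).eq, (hP j).eq] using
      hρ.conjTranspose_mul_mul_same (P i - P j)
  have htwice := posSemidef_sum Finset.univ fun i _ => posSemidef_sum Finset.univ fun j _ => hsq i j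
  rw [Finset.sum_sum_sub_mul_mul_sub_of_sum_eq_one hsum, ← ofNat_smul_eq_nsmul ℝ] at htwice
  simpa only [inv_smul_smul₀ (two_ne_zero' ℝ), Nat.cast_smul_eq_nsmul 𝕜] using
    htwice.smul (a := (2 : ℝ)⁻¹) (by norm_num)

open scoped MatrixOrder in
theorem PosSemidef.trace_mul_nonneg {A B : Matrix n n 𝕜} (hA : A.PosSemidef) (hB : B.PosSemidef) :
    0 ≤ (A * B).trace := by
  obtain ⟨C, rfl⟩ := CStarAlgebra.nonneg_iff_eq_star_mul_self.mp hA.nonneg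
  rw [mul_assoc, trace_mul_comm]
  exact (hB.mul_mul_conjTranspose_same C).trace_nonneg

end Matrix

theorem pinching_inequality_general {d k : ℕ} (hk : 1 ≤ k)
    (ρ : Matrix (Fin d) (Fin d) ℂ) (hρ : ρ.PosSemidef)
    (P : Fin k → Matrix (Fin d) (Fin d) ℂ)
    (hproj : ∀ i, (P i)ᴴ = P i ∧ P i * P i = P i)
    (hsum : ∑ i, P i = 1) :
    ((k : ℂ) • (∑ i, P i * ρ * P i) - ρ).PosSemidef ∧
      ∀ E : Matrix (Fin d) (Fin d) ℂ, E.PosSemidef →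
        (E * ρ).trace.re / (k : ℝ) ≤ (E * ∑ i, P i * ρ * P i).trace.re := by
  have hpinch : ((k : ℂ) • (∑ i, P i * ρ * P i) - ρ).PosSemidef := by
    simpa only [Fintype.card_fin] using
      hρ.card_smul_sum_mul_mul_sub (fun i => (hproj i).1) hsum
  refine ⟨hpinch, fun E hE => ?_⟩
  have htrace := hE.trace_mul_nonneg hpinch
  rw [Matrix.mul_sub, Matrix.mul_smul, trace_sub, trace_smul, smul_eq_mul, sub_nonneg] at htrace
  rw [div_le_iff₀ (by exact_mod_cast hk)]
  simpa [mul_comm] using Complex.re_le_re htrace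

/-- The pinching inequality: if `P 1, …, P k` are pairwise-orthogonal orthogonal projections
summing to the identity and `ρ` is positive semidefinite, then `k • Σᵢ Pᵢ ρ Pᵢ - ρ` is
positive semidefinite; consequently `tr(E · Σᵢ Pᵢ ρ Pᵢ) ≥ tr(E ρ)/k` for every positive
semidefinite `E`. -/
theorem pinching_inequality {d k : ℕ} (hk : 1 ≤ k)
    (ρ : Matrix (Fin d) (Fin d) ℂ) (hρ : ρ.PosSemidef)
    (P : Fin k → Matrix (Fin d) (Fin d) ℂ)
    (hproj : ∀ i, (P i)ᴴ = P i ∧ P i * P i = P i)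
    (horth : ∀ i j, i ≠ j → P i * P j = 0)
    (hsum : ∑ i, P i = 1) :
    ((k : ℂ) • (∑ i, P i * ρ * P i) - ρ).PosSemidef ∧
      ∀ E : Matrix (Fin d) (Fin d) ℂ, E.PosSemidef →
        (E * ρ).trace.re / (k : ℝ) ≤ (E * ∑ i, P i * ρ * P i).trace.re :=
  pinching_inequality_general hk ρ hρ P hproj hsum
end

section
/- Let U be a unitary operator and P an orthogonal projection on a finite-dimensional complex inner product space (equivalently, U a unitary d×d complex matrix and P a d×d matrix with P² = P = Pᴴ). Then the operator norm of the commutator satisfies ‖U·P − P·U‖ ≤ 1. -/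
/-!
Writing `Q = 1 - P`, the commutator splits as `U P - P U = Q U P - P U Q`. Applied to `x`, the two
terms land in the orthogonal subspaces `range Q` and `range P`, and the projections do not increase
norms, so `‖(U P - P U) x‖² ≤ ‖U P x‖² + ‖U Q x‖² = ‖P x‖² + ‖Q x‖² = ‖x‖²`.
-/

open ContinuousLinearMap

namespace IsStarProjection

variable {𝕜 E : Type*} [RCLike 𝕜] [NormedAddCommGroup E] [InnerProductSpace 𝕜 E] [CompleteSpace E]
  {P : E →L[𝕜] E}

theorem norm_apply_le (hP : IsStarProjection P) (x : E) : ‖P x‖ ≤ ‖x‖ :=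
  (P.le_opNorm x).trans (mul_le_of_le_one_left (norm_nonneg x) hP.norm_le)

theorem inner_apply_one_sub_apply (hP : IsStarProjection P) (x y : E) :
    inner 𝕜 (P x) ((1 - P) y) = 0 := by
  rw [← adjoint_inner_right, ← star_eq_adjoint, hP.isSelfAdjoint.star_eq, ← mul_apply_eq_comp,
    hP.mul_one_sub_self, zero_apply, inner_zero_right]

theorem norm_sq_apply_add_norm_sq_one_sub_apply (hP : IsStarProjection P) (x : E) :
    ‖P x‖ ^ 2 + ‖(1 - P) x‖ ^ 2 = ‖x‖ ^ 2 := by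
  have hx : P x + (1 - P) x = x := by simp
  rw [sq, sq, ← norm_add_sq_eq_norm_sq_add_norm_sq_of_inner_eq_zero _ _
    (hP.inner_apply_one_sub_apply x x), hx, sq]

theorem norm_sq_one_sub_apply_sub_apply (hP : IsStarProjection P) (y z : E) :
    ‖(1 - P) y - P z‖ ^ 2 = ‖(1 - P) y‖ ^ 2 + ‖P z‖ ^ 2 := by
  have horth : inner 𝕜 ((1 - P) y) (-P z) = 0 := by
    rw [inner_neg_right, ← inner_conj_symm, hP.inner_apply_one_sub_apply, map_zero, neg_zero]
  rw [sub_eq_add_neg, sq, norm_add_sq_eq_norm_sq_add_norm_sq_of_inner_eq_zero _ _ horth, norm_neg,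
    sq, sq]

end IsStarProjection

/-- For a unitary `U` and an orthogonal projection `P` on a finite-dimensional complex
inner product space, the operator norm of the commutator satisfies `‖U·P - P·U‖ ≤ 1`. -/
theorem commutator_unitary_projection_norm_le_one
    {E : Type*} [NormedAddCommGroup E] [InnerProductSpace ℂ E] [FiniteDimensional ℂ E]
    (U P : E →L[ℂ] E)
    (hU : U ∈ unitary (E →L[ℂ] E))
    (hP_idem : P * P = P) (hP_sa : IsSelfAdjoint P) :
    ‖U * P - P * U‖ ≤ 1 := by
  have hP : IsStarProjection P := ⟨hP_idem, hP_sa⟩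
  refine opNorm_le_bound _ zero_le_one fun x => ?_
  have hsplit : (U * P - P * U) x = (1 - P) (U (P x)) - P (U ((1 - P) x)) := by
    rw [show U * P - P * U = (1 - P) * U * P - P * U * (1 - P) by noncomm_ring]
    rfl
  have hsq : ‖(U * P - P * U) x‖ ^ 2 ≤ ‖x‖ ^ 2 :=
    calc ‖(U * P - P * U) x‖ ^ 2
        = ‖(1 - P) (U (P x))‖ ^ 2 + ‖P (U ((1 - P) x))‖ ^ 2 := by
          rw [hsplit, hP.norm_sq_one_sub_apply_sub_apply]
      _ ≤ ‖U (P x)‖ ^ 2 + ‖U ((1 - P) x)‖ ^ 2 := by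
          gcongr
          exacts [hP.one_sub.norm_apply_le _, hP.norm_apply_le _]
      _ = ‖P x‖ ^ 2 + ‖(1 - P) x‖ ^ 2 := by
          rw [norm_map_of_mem_unitary hU, norm_map_of_mem_unitary hU]
      _ = ‖x‖ ^ 2 := hP.norm_sq_apply_add_norm_sq_one_sub_apply x
  rw [one_mul]
  exact (pow_le_pow_iff_left₀ (norm_nonneg _) (norm_nonneg _) two_ne_zero).mp hsq
end

section
/- Let n ≥ 1, let ε > 0, and let k be a natural number with k ≥ (2 + ε)·n. Let S₁, …, S_k be subsets of {0,1}ⁿ, each of size 2^{n−1}, chosen independently and uniformly at random among all subsets of {0,1}ⁿ of size 2^{n−1}. For a subset S ⊆ {0,1}ⁿ, let Ξ_S be the pinching channel on 2ⁿ×2ⁿ complex matrices given by Ξ_S(ρ) = Π_S ρ Π_S + (1 − Π_S) ρ (1 − Π_S), where Π_S = Σ_{x ∈ S} |x⟩⟨x|, and let Ξ be the full dephasing channel Ξ(ρ) = Σ_{x ∈ {0,1}ⁿ} |x⟩⟨x| ρ |x⟩⟨x| (the diagonal part of ρ). Then the probability that the composed channel Ξ_{S_k} ∘ Ξ_{S_{k−1}}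 ∘ ⋯ ∘ Ξ_{S₁} equals Ξ (as a map on all 2ⁿ×2ⁿ complex matrices) is at least 1 − 2^{−εn}. -/
/-!
The composition of the pinchings keeps the `(x, y)` entry of `ρ` when every `S i` contains both
or neither of `x, y`, and kills it otherwise; so it is the full dephasing exactly when the
`S i` separate the points of `{0,1}ⁿ`. A uniformly random half-size subset fails to separate a
fixed pair `x ≠ y` with probability at most `1/2`, hence `k` independent ones all fail with
probability at most `2⁻ᵏ`, and a union bound over the fewer than `4ⁿ` pairs bounds the failure
probability by `2^(2n - k) ≤ 2^(-εn)`.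
-/

noncomputable section

open scoped Classical

/-- `Π_S = Σ_{x ∈ S} |x⟩⟨x|`: the diagonal orthogonal projection associated with `S`. -/
def projMat {X : Type*} [Fintype X] [DecidableEq X] (S : Finset X) : Matrix X X ℂ :=
  Matrix.diagonal fun x => if x ∈ S then 1 else 0

/-- The pinching channel `Ξ_S(ρ) = Π_S ρ Π_S + (1 - Π_S) ρ (1 - Π_S)`. -/
def pinch {X : Type*} [Fintype X] [DecidableEq X] (S : Finset X) (ρ : Matrix X X ℂ) :
    Matrix X X ℂ :=
  projMat S * ρ * projMat S + (1 - projMat S) * ρ * (1 - projMat S)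

/-- `pinchSeq k S ρ = (Ξ_{S k} ∘ Ξ_{S (k-1)} ∘ ⋯ ∘ Ξ_{S 1})(ρ)`. -/
def pinchSeq {X : Type*} [Fintype X] [DecidableEq X] :
    (k : ℕ) → (Fin k → Finset X) → Matrix X X ℂ → Matrix X X ℂ
  | 0, _, ρ => ρ
  | k + 1, S, ρ => pinch (S (Fin.last k)) (pinchSeq k (fun i => S i.castSucc) ρ)

open Finset Matrix

def PointSeparating {ι X : Type*} (S : ι → Finset X) : Prop :=
  Pairwise fun x y => ∃ i, ¬(x ∈ S i ↔ y ∈ S i)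

section Pinching

variable {X : Type*} [Fintype X] [DecidableEq X]

lemma one_sub_projMat (S : Finset X) :
    1 - projMat S = diagonal fun x => if x ∈ S then 0 else 1 := by
  rw [projMat, ← diagonal_one, diagonal_sub]
  congr 1
  ext x
  split_ifs <;> simp

lemma pinch_apply (S : Finset X) (ρ : Matrix X X ℂ) (x y : X) :
    pinch S ρ x y = if (x ∈ S ↔ y ∈ S) then ρ x y else 0 := by
  rw [pinch, one_sub_projMat, projMat]
  simp only [Matrix.add_apply, mul_diagonal, diagonal_mul]
  split_ifs <;> simp_all

lemma pinchSeq_apply (k : ℕ) (S : Fin k → Finset X) (ρ : Matrix X X ℂ) (x y : X) :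
    pinchSeq k S ρ x y = if ∀ i, (x ∈ S i ↔ y ∈ S i) then ρ x y else 0 := by
  induction k generalizing ρ with
  | zero => simp [pinchSeq]
  | succ k ih =>
    simp only [pinchSeq, pinch_apply, ih, Fin.forall_fin_succ']
    split_ifs <;> tauto

lemma pinchSeq_eq_diagonal_iff (k : ℕ) (S : Fin k → Finset X) :
    (∀ ρ : Matrix X X ℂ, pinchSeq k S ρ = diagonal fun x => ρ x x) ↔ PointSeparating S := by
  constructor
  · intro h x y hxy
    by_contra! hS
    have := congrFun₂ (h (single x y 1)) x y
    simp [pinchSeq_apply, hS, diagonal_apply_ne _ hxy] at this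
  · intro h ρ
    ext x y
    rcases eq_or_ne x y with rfl | hxy
    · simp [pinchSeq_apply]
    · obtain ⟨i, hi⟩ := h hxy
      rw [pinchSeq_apply, if_neg fun hS => hi (hS i), diagonal_apply_ne _ hxy]

end Pinching

lemma card_filter_subtype {α : Type*} [Fintype α] (p q : α → Prop) [DecidablePred p]
    [DecidablePred q] :
    #{a : Subtype p | q a} = #{a | p a ∧ q a} := by
  rw [← Fintype.card_subtype, ← Fintype.card_subtype]
  exact Fintype.card_congr (Equiv.subtypeSubtypeEquivSubtypeInter p q)

section Counting

variable {X : Type*} [Fintype X] [DecidableEq X] {x y : X}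

lemma card_filter_card_eq_notMem_notMem (hxy : x ≠ y) (j : ℕ) :
    #{A : Finset X | #A = j ∧ x ∉ A ∧ y ∉ A} = (Fintype.card X - 2).choose j := by
  have hfilter : ({A : Finset X | #A = j ∧ x ∉ A ∧ y ∉ A} : Finset (Finset X))
      = powersetCard j ((univ.erase x).erase y) := by
    ext A
    simp only [mem_filter, mem_univ, and_true, true_and, mem_powersetCard, subset_iff, mem_erase]
    constructor
    · rintro ⟨hA, hx, hy⟩
      exact ⟨fun a ha => ⟨by rintro rfl; exact hy ha, by rintro rfl; exact hx ha⟩, hA⟩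
    · rintro ⟨hA, rfl⟩
      exact ⟨rfl, fun hx => (hA hx).2 rfl, fun hy => (hA hy).1 rfl⟩
  rw [hfilter, card_powersetCard, card_erase_of_mem (mem_erase.2 ⟨hxy.symm, mem_univ y⟩),
    card_erase_of_mem (mem_univ x), card_univ, Nat.sub_sub]

lemma card_filter_card_eq_succ_mem_notMem (hxy : x ≠ y) (j : ℕ) :
    #{A : Finset X | #A = j + 1 ∧ x ∈ A ∧ y ∉ A} = #{A : Finset X | #A = j ∧ x ∉ A ∧ y ∉ A} := by
  refine card_nbij' (·.erase x) (insert x) ?_ ?_ ?_ ?_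
  · intro A hA
    simp only [coe_filter, mem_univ, true_and, Set.mem_ofPred_eq] at hA ⊢
    obtain ⟨hcard, hx, hy⟩ := hA
    exact ⟨by rw [card_erase_of_mem hx, hcard]; rfl, notMem_erase x A,
      fun h => hy (mem_of_mem_erase h)⟩
  · intro B hB
    simp only [coe_filter, mem_univ, true_and, Set.mem_ofPred_eq] at hB ⊢
    obtain ⟨hcard, hx, hy⟩ := hB
    exact ⟨by rw [card_insert_of_notMem hx, hcard], mem_insert_self x B,
      by rw [mem_insert]; rintro (rfl | h) <;> tauto⟩
  · intro A hA
    simp only [coe_filter, mem_univ, true_and, Set.mem_ofPred_eq] at hA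
    exact insert_erase hA.2.1
  · intro B hB
    simp only [coe_filter, mem_univ, true_and, Set.mem_ofPred_eq] at hB
    exact erase_insert hB.2.1

lemma card_filter_card_eq_compl {m : ℕ} (hX : Fintype.card X = 2 * m) (p : Finset X → Prop)
    [DecidablePred p] : #{A : Finset X | #A = m ∧ p Aᶜ} = #{A : Finset X | #A = m ∧ p A} := by
  refine card_nbij' compl compl ?_ ?_ (fun A _ => compl_compl A) (fun A _ => compl_compl A) <;>
  · intro A hA
    simp only [coe_filter, mem_univ, true_and, Set.mem_ofPred_eq, compl_compl] at hA ⊢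
    exact ⟨by rw [card_compl, hX, hA.1]; omega, hA.2⟩

lemma two_mul_card_filter_mem_iff_mem_le {m : ℕ} (hX : Fintype.card X = 2 * m) (hxy : x ≠ y) :
    2 * #{A : Finset X | #A = m ∧ (x ∈ A ↔ y ∈ A)} ≤ #{A : Finset X | #A = m} := by
  obtain ⟨j, rfl⟩ : ∃ j, m = j + 1 := by
    have := Fintype.one_lt_card_iff_nontrivial.2 ⟨x, y, hxy⟩
    exact Nat.exists_eq_add_one.2 (by omega)
  -- `2 * C(2j, j+1)` sets fail to separate `x, y`, while `2 * C(2j, j)` separate them.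
  have hboth : #{A : Finset X | #A = j + 1 ∧ x ∈ A ∧ y ∈ A}
      = #{A : Finset X | #A = j + 1 ∧ x ∉ A ∧ y ∉ A} := by
    rw [← card_filter_card_eq_compl hX]
    simp only [mem_compl]
  have hnonsep : #{A : Finset X | #A = j + 1 ∧ (x ∈ A ↔ y ∈ A)}
      ≤ #{A : Finset X | #A = j + 1 ∧ x ∈ A ∧ y ∈ A}
        + #{A : Finset X | #A = j + 1 ∧ x ∉ A ∧ y ∉ A} := by
    refine (card_le_card fun A hA => ?_).trans (card_union_le _ _)
    simp only [mem_union, mem_filter, mem_univ, true_and] at hA ⊢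
    tauto
  have hsep : #{A : Finset X | #A = j + 1 ∧ x ∈ A ∧ y ∉ A}
        + #{A : Finset X | #A = j + 1 ∧ y ∈ A ∧ x ∉ A}
      ≤ #{A : Finset X | #A = j + 1 ∧ ¬(x ∈ A ↔ y ∈ A)} := by
    rw [← card_union_of_disjoint (disjoint_filter.2 fun A _ hx hy => hy.2.2 hx.2.1)]
    refine card_le_card fun A hA => ?_
    simp only [mem_union, mem_filter, mem_univ, true_and] at hA ⊢
    tauto
  have htotal : #{A : Finset X | #A = j + 1 ∧ (x ∈ A ↔ y ∈ A)}
      + #{A : Finset X | #A = j + 1 ∧ ¬(x ∈ A ↔ y ∈ A)} = #{A : Finset X | #A = j + 1} := by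
    simp only [← filter_filter, card_filter_add_card_filter_not]
  have hcard : Fintype.card X - 2 = 2 * j := by omega
  have hneither : #{A : Finset X | #A = j + 1 ∧ x ∉ A ∧ y ∉ A} = (2 * j).choose (j + 1) := by
    rw [card_filter_card_eq_notMem_notMem hxy, hcard]
  have hxonly : #{A : Finset X | #A = j + 1 ∧ x ∈ A ∧ y ∉ A} = (2 * j).choose j := by
    rw [card_filter_card_eq_succ_mem_notMem hxy, card_filter_card_eq_notMem_notMem hxy, hcard]
  have hyonly : #{A : Finset X | #A = j + 1 ∧ y ∈ A ∧ x ∉ A} = (2 * j).choose j := by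
    rw [card_filter_card_eq_succ_mem_notMem hxy.symm, card_filter_card_eq_notMem_notMem hxy.symm,
      hcard]
  have hmiddle : (2 * j).choose (j + 1) ≤ (2 * j).choose j := by
    simpa using Nat.choose_le_middle (j + 1) (2 * j)
  omega

lemma card_filter_mem_iff_mem_le_half {m : ℕ} (hX : Fintype.card X = 2 * m) (hxy : x ≠ y) :
    #{A : {A : Finset X // #A = m} | x ∈ A.1 ↔ y ∈ A.1}
      ≤ Fintype.card {A : Finset X // #A = m} / 2 := by
  rw [Nat.le_div_iff_mul_le two_pos, mul_comm,
    card_filter_subtype (fun A : Finset X => #A = m) (fun A => x ∈ A ↔ y ∈ A),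
    Fintype.card_subtype]
  exact two_mul_card_filter_mem_iff_mem_le hX hxy

end Counting

lemma card_filter_exists_forall_le {ι Y : Type*} [Fintype Y] (P : Finset ι) (E : ι → Y → Prop)
    [∀ p, DecidablePred (E p)] {c : ℕ} (hc : ∀ p ∈ P, #{A | E p A} ≤ c) (k : ℕ) :
    #{S : Fin k → Y | ∃ p ∈ P, ∀ i, E p (S i)} ≤ #P * c ^ k := by
  calc #{S : Fin k → Y | ∃ p ∈ P, ∀ i, E p (S i)}
      ≤ #(P.biUnion fun p => Fintype.piFinset fun _ => {A | E p A}) := by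
        refine card_le_card fun S hS => ?_
        simpa [Fintype.mem_piFinset] using hS
    _ ≤ #P * c ^ k := card_biUnion_le_card_mul _ _ _ fun p hp => by
        rw [Fintype.card_piFinset, prod_const, card_univ, Fintype.card_fin]
        exact Nat.pow_le_pow_left (hc p hp) k

lemma two_pow_mul_card_not_pointSeparating_le {X : Type*} [Fintype X] [DecidableEq X] {m : ℕ}
    (hX : Fintype.card X = 2 * m) (k : ℕ) :
    2 ^ k * #{S : Fin k → {A : Finset X // #A = m} | ¬PointSeparating fun i => (S i).1}
      ≤ Fintype.card X ^ 2 * Fintype.card {A : Finset X // #A = m} ^ k := by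
  set M := Fintype.card {A : Finset X // #A = m}
  have hunion : #{S : Fin k → {A : Finset X // #A = m} | ¬PointSeparating fun i => (S i).1}
      ≤ #(univ : Finset X).offDiag * (M / 2) ^ k := by
    refine (card_le_card fun S hS => ?_).trans (card_filter_exists_forall_le _ _
      (fun p hp => card_filter_mem_iff_mem_le_half hX (mem_offDiag.1 hp).2.2) k)
    rw [mem_filter] at hS ⊢
    simp only [PointSeparating, Pairwise, not_forall, not_exists, not_not] at hS
    obtain ⟨x, y, hxy, hS⟩ := hS.2
    exact ⟨mem_univ S, (x, y), mem_offDiag.2 ⟨mem_univ x, mem_univ y, hxy⟩, hS⟩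
  calc 2 ^ k * #{S : Fin k → {A : Finset X // #A = m} | ¬PointSeparating fun i => (S i).1}
      ≤ #(univ : Finset X).offDiag * (2 * (M / 2)) ^ k := by
        rw [mul_pow, mul_left_comm]
        exact Nat.mul_le_mul_left _ hunion
    _ ≤ Fintype.card X ^ 2 * M ^ k := by
      gcongr
      · rw [offDiag_card, card_univ, sq]
        exact Nat.sub_le _ _
      · exact Nat.mul_div_le M 2

lemma one_sub_div_two_pow_le_card_pointSeparating_div {X : Type*} [Fintype X] [DecidableEq X]
    {m : ℕ} (hX : Fintype.card X = 2 * m) (k : ℕ) :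
    1 - (Fintype.card X : ℝ) ^ 2 / 2 ^ k ≤
      #{S : Fin k → {A : Finset X // #A = m} | PointSeparating fun i => (S i).1} /
        (Fintype.card (Fin k → {A : Finset X // #A = m}) : ℝ) := by
  have hM : 0 < Fintype.card {A : Finset X // #A = m} := by
    rw [Fintype.card_finset_len, hX]
    exact Nat.choose_pos (by omega)
  have hbad := two_pow_mul_card_not_pointSeparating_le hX k
  set M := Fintype.card {A : Finset X // #A = m}
  set G := #{S : Fin k → {A : Finset X // #A = m} | PointSeparating fun i => (S i).1}
  set B := #{S : Fin k → {A : Finset X // #A = m} | ¬PointSeparating fun i => (S i).1}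
  have hsum : (G : ℝ) + B = (M : ℝ) ^ k := by
    exact_mod_cast (card_filter_add_card_filter_not _).trans (by simp [M])
  have hB : (B : ℝ) / M ^ k ≤ (Fintype.card X : ℝ) ^ 2 / 2 ^ k := by
    rw [div_le_div_iff₀ (by positivity) (by positivity)]
    exact_mod_cast (by linarith : B * 2 ^ k ≤ Fintype.card X ^ 2 * M ^ k)
  have hG : (G : ℝ) / M ^ k = 1 - B / M ^ k := by
    rw [eq_sub_iff_add_eq, ← add_div, hsum, div_self (by positivity)]
  rw [Fintype.card_fun, Fintype.card_fin, Nat.cast_pow, hG]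
  linarith

theorem random_pinchings_give_full_measurement_general
    (n : ℕ) (hn : 1 ≤ n) (ε : ℝ)
    (k : ℕ) (hk : (2 + ε) * (n : ℝ) ≤ (k : ℝ)) :
    1 - (2 : ℝ) ^ (-(ε * (n : ℝ))) ≤
      ((Finset.univ.filter
          (fun S : Fin k → {A : Finset (Fin n → ZMod 2) // A.card = 2 ^ (n - 1)} =>
            ∀ ρ : Matrix (Fin n → ZMod 2) (Fin n → ZMod 2) ℂ,
              pinchSeq k (fun i => (S i).1) ρ = Matrix.diagonal fun x => ρ x x)).card : ℝ) /
        (Fintype.card (Fin k → {A : Finset (Fin n → ZMod 2) // A.card = 2 ^ (n - 1)}) : ℝ) := by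
  have hcard : Fintype.card (Fin n → ZMod 2) = 2 ^ n := by simp
  have hX : Fintype.card (Fin n → ZMod 2) = 2 * 2 ^ (n - 1) := by
    rw [hcard, ← pow_succ', Nat.sub_add_cancel hn]
  have hfail : (Fintype.card (Fin n → ZMod 2) : ℝ) ^ 2 / 2 ^ k ≤ 2 ^ (-(ε * n)) := by
    rw [hcard, Nat.cast_pow, Nat.cast_ofNat, ← pow_mul, ← Real.rpow_natCast,
      ← Real.rpow_natCast, ← Real.rpow_sub two_pos]
    exact Real.rpow_le_rpow_of_exponent_le one_le_two (by push_cast; linarith)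
  rw [filter_congr fun S _ => pinchSeq_eq_diagonal_iff k fun i => (S i).1]
  linarith [one_sub_div_two_pow_le_card_pointSeparating_div hX k]

/-- If `k ≥ (2 + ε)·n` subsets of `{0,1}ⁿ` of size `2^{n-1}` are chosen independently and
uniformly at random, then with probability at least `1 - 2^{-εn}` the composition of the
associated pinching channels equals the full dephasing (computational-basis measurement)
channel. -/
theorem random_pinchings_give_full_measurement
    (n : ℕ) (hn : 1 ≤ n) (ε : ℝ) (hε : 0 < ε)
    (k : ℕ) (hk : (2 + ε) * (n : ℝ) ≤ (k : ℝ)) :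
    1 - (2 : ℝ) ^ (-(ε * (n : ℝ))) ≤
      ((Finset.univ.filter
          (fun S : Fin k → {A : Finset (Fin n → ZMod 2) // A.card = 2 ^ (n - 1)} =>
            ∀ ρ : Matrix (Fin n → ZMod 2) (Fin n → ZMod 2) ℂ,
              pinchSeq k (fun i => (S i).1) ρ = Matrix.diagonal fun x => ρ x x)).card : ℝ) /
        (Fintype.card (Fin k → {A : Finset (Fin n → ZMod 2) // A.card = 2 ^ (n - 1)}) : ℝ) :=
  random_pinchings_give_full_measurement_general n hn ε k hk

end
end
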